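/- Let f and g be two distinct s-sparse multilinear polynomials over GF(2) in n variables, both of degree at most d, and let p ≥ 1/2. If d ≥ ⌊log₂ s⌋ + 1 then Pr_{x ~ D_{n,p}}[f(x) ≠ g(x)] ≥ p^{d−⌊log₂ s⌋−1}(1−p)^{⌊log₂ s⌋+1}, and if d < ⌊log₂ s⌋ + 1 then Pr_{x ~ D_{n,p}}[f(x) ≠ g(x)] ≥ (1−p)^d. -/

import Mathlib

/-- Evaluation of a multilinear polynomial over GF(2), given by its set of
monomials, at a Boolean point: parity of the number of satisfied monomials. -/
def evalGF2 {n : ℕ} (P : Finset (Finset (Fin n))) (x : Fin n → Bool) : Bool :=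
  decide (Odd (P.filter (fun M => ∀ i ∈ M, x i = true)).card)

/-- Weight of a point `x ∈ {0,1}^n` under the `p`-product distribution. -/
noncomputable def prodWeight {n : ℕ} (p : ℝ) (x : Fin n → Bool) : ℝ :=
  ∏ i, (if x i then p else 1 - p)

/-- Probability under the `p`-product distribution `D_{n,p}` of an event. -/
noncomputable def prodProb {n : ℕ} (p : ℝ) (E : (Fin n → Bool) → Prop)
    [DecidablePred E] : ℝ :=
  ∑ x ∈ Finset.univ.filter (fun x : Fin n → Bool => E x), prodWeight p x

/-!
Write `R = f + g = P ∆ Q`; it is a nonzero polynomial with at most `2s` monomials of degree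
at most `d`, and `f ≠ g` exactly where `R = 1`. Pick a variable `xᵢ` and write
`R = R₀ + xᵢ R₁`, where `R₀ = R|_{xᵢ=0}` and `R₁ = ∂ᵢR`, so that
`Pr[R = 1] = (1 - p) Pr[R₀ = 1] + p Pr[R₀ + R₁ = 1]`. If `R₀ = 0` then `R = xᵢ R₁` with `R₁` of
degree `d - 1`; if `R₀ + R₁ = 0` then `R = (1 + xᵢ) R₀` with `R₀` of degree `d - 1` and half as
many monomials; otherwise both restrictions are nonzero, have no more monomials than `R` and
fewer variables. Induction on the number of variables then gives
`Pr[R = 1] ≥ p^(d-m) (1-p)^m` with `m = min d ⌊log₂ #R⌋`, which is decreasing in `m` since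
`1 - p ≤ p`. As `#R ≤ 2s` and `⌊log₂ 2s⌋ = ⌊log₂ s⌋ + 1`, this is at least the claimed bound.
-/

open Finset Function
open scoped symmDiff

theorem Finset.odd_card_symmDiff {α : Type*} [DecidableEq α] (s t : Finset α) :
    Odd (s ∆ t).card ↔ ¬(Odd s.card ↔ Odd t.card) := by
  have h := card_union_add_card_inter s t
  have hunion : (s ∆ t) ∪ (s ∩ t) = s ∪ t := by
    rw [symmDiff_eq_sup_sdiff_inf]; exact sdiff_union_of_subset inter_subset_union
  have hdisj : Disjoint (s ∆ t) (s ∩ t) := by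
    rw [symmDiff_eq_sup_sdiff_inf]; exact sdiff_disjoint
  rw [← hunion, card_union_of_disjoint hdisj] at h
  simp only [Nat.odd_iff]
  omega

section Polynomials

variable {n : ℕ}

theorem evalGF2_symmDiff (P Q : Finset (Finset (Fin n))) (x : Fin n → Bool) :
    evalGF2 (P ∆ Q) x = xor (evalGF2 P x) (evalGF2 Q x) := by
  have hfilter : (P ∆ Q).filter (fun M => ∀ i ∈ M, x i = true) =
      P.filter (fun M => ∀ i ∈ M, x i = true) ∆ Q.filter (fun M => ∀ i ∈ M, x i = true) := by
    ext M; simp only [mem_filter, mem_symmDiff]; tauto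
  simp only [evalGF2, hfilter, odd_card_symmDiff]
  by_cases hP : Odd (P.filter (fun M => ∀ i ∈ M, x i = true)).card <;>
    by_cases hQ : Odd (Q.filter (fun M => ∀ i ∈ M, x i = true)).card <;> simp [hP, hQ]

theorem evalGF2_image {P : Finset (Finset (Fin n))} {f : Finset (Fin n) → Finset (Fin n)}
    (hf : Set.InjOn f P) {x y : Fin n → Bool}
    (h : ∀ M ∈ P, (∀ j ∈ f M, x j = true) ↔ ∀ j ∈ M, y j = true) :
    evalGF2 (P.image f) x = evalGF2 P y := by
  simp only [evalGF2, filter_image]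
  rw [card_image_of_injOn (hf.mono (coe_subset.mpr (filter_subset _ _))), filter_congr h]

/- With `P = restrictFalse P i + xᵢ · pderivGF2 P i`, the restrictions of `P` to `xᵢ = 0` and
`xᵢ = 1` are `restrictFalse P i` and `restrictTrue P i`. -/

def restrictFalse (P : Finset (Finset (Fin n))) (i : Fin n) : Finset (Finset (Fin n)) :=
  P.filter (i ∉ ·)

def pderivGF2 (P : Finset (Finset (Fin n))) (i : Fin n) : Finset (Finset (Fin n)) :=
  (P.filter (i ∈ ·)).image (·.erase i)

def restrictTrue (P : Finset (Finset (Fin n))) (i : Fin n) : Finset (Finset (Fin n)) :=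
  pderivGF2 P i ∆ restrictFalse P i

theorem erase_injOn_filter_mem (P : Finset (Finset (Fin n))) (i : Fin n) :
    Set.InjOn (·.erase i) (P.filter (i ∈ ·) : Set (Finset (Fin n))) := by
  intro M hM N hN h
  rw [mem_coe, mem_filter] at hM hN
  rw [← insert_erase hM.2, ← insert_erase hN.2]
  exact congrArg (insert i) h

theorem mem_pderivGF2 {P : Finset (Finset (Fin n))} {i : Fin n} {N : Finset (Fin n)} :
    N ∈ pderivGF2 P i ↔ i ∉ N ∧ insert i N ∈ P := by
  constructor
  · simp only [pderivGF2, mem_image, mem_filter]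
    rintro ⟨M, ⟨hM, hiM⟩, rfl⟩
    exact ⟨notMem_erase i M, by rwa [insert_erase hiM]⟩
  · rintro ⟨hiN, hN⟩
    exact mem_image.mpr ⟨insert i N, mem_filter.mpr ⟨hN, mem_insert_self i N⟩, erase_insert hiN⟩

theorem card_pderivGF2_add_card_restrictFalse (P : Finset (Finset (Fin n))) (i : Fin n) :
    (pderivGF2 P i).card + (restrictFalse P i).card = P.card := by
  rw [pderivGF2, card_image_of_injOn (erase_injOn_filter_mem P i), restrictFalse,
    card_filter_add_card_filter_not]

theorem card_restrictTrue_le (P : Finset (Finset (Fin n))) (i : Fin n) :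
    (restrictTrue P i).card ≤ P.card :=
  calc (restrictTrue P i).card ≤ (pderivGF2 P i ∪ restrictFalse P i).card :=
        card_le_card symmDiff_subset_union
    _ ≤ P.card := (card_union_le _ _).trans (card_pderivGF2_add_card_restrictFalse P i).le

theorem card_add_one_le_of_mem_pderivGF2 {P : Finset (Finset (Fin n))} {i : Fin n} {d : ℕ}
    (hP : ∀ M ∈ P, M.card ≤ d) {N : Finset (Fin n)} (hN : N ∈ pderivGF2 P i) :
    N.card + 1 ≤ d := by
  obtain ⟨hiN, hN⟩ := mem_pderivGF2.mp hN
  exact card_insert_of_notMem hiN ▸ hP _ hN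

theorem evalGF2_update_false (P : Finset (Finset (Fin n))) (i : Fin n) (x : Fin n → Bool) :
    evalGF2 P (update x i false) = evalGF2 (restrictFalse P i) x := by
  have hsat : ∀ M : Finset (Fin n),
      (∀ j ∈ M, update x i false j = true) ↔ i ∉ M ∧ ∀ j ∈ M, x j = true := by
    intro M; simp only [update_apply]; grind
  simp only [evalGF2, restrictFalse, filter_filter, hsat]

theorem evalGF2_update_of_notMem {P : Finset (Finset (Fin n))} {i : Fin n}
    (hP : ∀ M ∈ P, i ∉ M) (x : Fin n → Bool) (b : Bool) :
    evalGF2 P (update x i b) = evalGF2 P x := by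
  have hsat : ∀ M ∈ P, (∀ j ∈ M, update x i b j = true) ↔ ∀ j ∈ M, x j = true := by
    intro M hM; have := hP M hM; simp only [update_apply]; grind
  simp only [evalGF2, filter_congr hsat]

theorem evalGF2_update_true (P : Finset (Finset (Fin n))) (i : Fin n) (x : Fin n → Bool) :
    evalGF2 P (update x i true) = evalGF2 (restrictTrue P i) x := by
  have hsplit : P = P.filter (i ∈ ·) ∆ restrictFalse P i := by
    rw [restrictFalse, symmDiff_eq_union (disjoint_filter_filter_not _ _ _),
      filter_union_filter_not_eq]
  have hderiv : evalGF2 (pderivGF2 P i) x = evalGF2 (P.filter (i ∈ ·)) (update x i true) := by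
    refine evalGF2_image (erase_injOn_filter_mem P i) fun M _ => ?_
    simp only [mem_erase, update_apply]; grind
  have hfalse : evalGF2 (restrictFalse P i) (update x i true) = evalGF2 (restrictFalse P i) x :=
    evalGF2_update_of_notMem (fun _ hM => (mem_filter.mp hM).2) x true
  rw [restrictTrue, evalGF2_symmDiff, hderiv, ← hfalse, ← evalGF2_symmDiff, ← hsplit]

def vars (P : Finset (Finset (Fin n))) : Finset (Fin n) := P.biUnion id

theorem eq_singleton_empty_of_vars_eq_empty {P : Finset (Finset (Fin n))} (hP : P.Nonempty)
    (h : vars P = ∅) : P = {∅} :=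
  hP.subset_singleton_iff.mp fun M hM => mem_singleton.mpr <| eq_empty_of_forall_notMem
    fun j hj => notMem_empty j (h ▸ mem_biUnion.mpr ⟨M, hM, hj⟩)

def MonomialsBelow (Q P : Finset (Finset (Fin n))) (i : Fin n) : Prop :=
  ∀ N ∈ Q, i ∉ N ∧ ∃ M ∈ P, N ⊆ M

theorem MonomialsBelow.card_vars_lt {Q P : Finset (Finset (Fin n))} {i : Fin n}
    (h : MonomialsBelow Q P i) (hi : i ∈ vars P) : (vars Q).card < (vars P).card := by
  refine card_lt_card (Finset.ssubset_of_subset_of_ssubset ?_ (erase_ssubset hi))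
  intro j hj
  obtain ⟨N, hN, hjN⟩ := mem_biUnion.mp hj
  obtain ⟨hiN, M, hM, hNM⟩ := h N hN
  exact mem_erase.mpr ⟨fun hji => hiN (hji ▸ hjN), mem_biUnion.mpr ⟨M, hM, hNM hjN⟩⟩

theorem MonomialsBelow.card_le {Q P : Finset (Finset (Fin n))} {i : Fin n}
    (h : MonomialsBelow Q P i) {d : ℕ} (hP : ∀ M ∈ P, M.card ≤ d) : ∀ N ∈ Q, N.card ≤ d := by
  intro N hN
  obtain ⟨-, M, hM, hNM⟩ := h N hN
  exact (card_le_card hNM).trans (hP M hM)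

theorem monomialsBelow_restrictFalse (P : Finset (Finset (Fin n))) (i : Fin n) :
    MonomialsBelow (restrictFalse P i) P i := fun N hN =>
  ⟨(mem_filter.mp hN).2, N, (mem_filter.mp hN).1, subset_rfl⟩

theorem monomialsBelow_pderivGF2 (P : Finset (Finset (Fin n))) (i : Fin n) :
    MonomialsBelow (pderivGF2 P i) P i := fun N hN =>
  ⟨(mem_pderivGF2.mp hN).1, insert i N, (mem_pderivGF2.mp hN).2, subset_insert i N⟩

theorem monomialsBelow_restrictTrue (P : Finset (Finset (Fin n))) (i : Fin n) :
    MonomialsBelow (restrictTrue P i) P i := fun N hN =>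
  (mem_symmDiff.mp hN).elim (fun h => monomialsBelow_pderivGF2 P i N h.1)
    (fun h => monomialsBelow_restrictFalse P i N h.1)

end Polynomials

section Probability

variable {n : ℕ}

theorem prodProb_congr (p : ℝ) {E E' : (Fin n → Bool) → Prop} [DecidablePred E]
    [DecidablePred E'] (h : ∀ x, E x ↔ E' x) : prodProb p E = prodProb p E' := by
  unfold prodProb; rw [filter_congr fun x _ => h x]

theorem prodProb_true (p : ℝ) : prodProb p (fun _ : Fin n → Bool => True) = 1 := by
  simp only [prodProb, filter_true, prodWeight]
  calc _ = ∏ _ : Fin n, ∑ b : Bool, (if b then p else 1 - p) := (Fintype.prod_sum _).symm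
    _ = 1 := by simp

theorem prodProb_false (p : ℝ) : prodProb p (fun _ : Fin n → Bool => False) = 0 := by
  simp [prodProb]

theorem prodProb_eq_add (p : ℝ) (E : (Fin n → Bool) → Prop) [DecidablePred E] (i : Fin n) :
    prodProb p E = (1 - p) * prodProb p (fun x => E (update x i false)) +
      p * prodProb p (fun x => E (update x i true)) := by
  set c : Bool → ℝ := fun b => if b then p else 1 - p
  set e := Equiv.funSplitAt i Bool
  have hweight : ∀ b y, prodWeight p (e.symm (b, y)) = c b * ∏ j, c (y j) := by
    intro b y
    rw [prodWeight, Fintype.prod_eq_mul_prod_subtype_ne _ i]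
    congr 1
    · simp [e, c]
    · exact prod_congr rfl fun j _ => by simp [e, c, j.2]
  have hupdate : ∀ b b' y, update (e.symm (b, y)) i b' = e.symm (b', y) := by
    intro b b' y; ext j; by_cases hj : j = i <;> simp [e, hj]
  have hsplit : ∀ F : (Fin n → Bool) → Prop, [DecidablePred F] →
      prodProb p F = ∑ b, c b * ∑ y, if F (e.symm (b, y)) then ∏ j, c (y j) else 0 := by
    intro F _
    rw [prodProb, sum_filter, ← e.symm.sum_comp, Fintype.sum_prod_type]
    refine sum_congr rfl fun b _ => ?_
    rw [mul_sum]
    exact sum_congr rfl fun y _ => by rw [hweight, mul_ite, mul_zero]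
  have hcond : ∀ b', prodProb p (fun x => E (update x i b')) =
      ∑ y, if E (e.symm (b', y)) then ∏ j, c (y j) else 0 := by
    intro b'
    simp only [hsplit, hupdate, ← sum_mul, Fintype.sum_bool, c]
    simp
  rw [hsplit E, Fintype.sum_bool, hcond, hcond, add_comm]
  rfl

theorem prodProb_evalGF2_eq_add (p : ℝ) (P : Finset (Finset (Fin n))) (i : Fin n) :
    prodProb p (evalGF2 P · = true) =
      (1 - p) * prodProb p (evalGF2 (restrictFalse P i) · = true) +
        p * prodProb p (evalGF2 (restrictTrue P i) · = true) := by
  rw [prodProb_eq_add p _ i]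
  simp only [evalGF2_update_false, evalGF2_update_true]

theorem prodProb_evalGF2_empty (p : ℝ) :
    prodProb p (evalGF2 (∅ : Finset (Finset (Fin n))) · = true) = 0 :=
  (prodProb_congr p fun _ => by simp [evalGF2]).trans (prodProb_false p)

theorem prodProb_evalGF2_singleton_empty (p : ℝ) :
    prodProb p (evalGF2 ({∅} : Finset (Finset (Fin n))) · = true) = 1 :=
  (prodProb_congr p fun _ => by simp [evalGF2, filter_singleton]).trans (prodProb_true p)

end Probability

theorem pow_sub_mul_pow_antitone {R : Type*} [CommSemiring R] [PartialOrder R] [IsOrderedRing R]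
    {a b : R} (ha : 0 ≤ a) (hab : a ≤ b) {d m m' : ℕ} (hm : m ≤ m') (hm' : m' ≤ d) :
    b ^ (d - m') * a ^ m' ≤ b ^ (d - m) * a ^ m :=
  calc b ^ (d - m') * a ^ m' = b ^ (d - m') * a ^ (m' - m) * a ^ m := by
        rw [mul_assoc, ← pow_add, Nat.sub_add_cancel hm]
    _ ≤ b ^ (d - m') * b ^ (m' - m) * a ^ m := by
        gcongr; exact pow_nonneg (ha.trans hab) _
    _ = b ^ (d - m) * a ^ m := by rw [← pow_add]; congr 2; omega

noncomputable def sparseBound (p : ℝ) (d t : ℕ) : ℝ :=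
  p ^ (d - min d (Nat.log 2 t)) * (1 - p) ^ min d (Nat.log 2 t)

section SparseBound

variable {p : ℝ}

theorem sparseBound_le_one (hp : 1 - p ≤ p) (hp1 : p ≤ 1) (d t : ℕ) : sparseBound p d t ≤ 1 :=
  mul_le_one₀ (pow_le_one₀ (by linarith) hp1) (pow_nonneg (by linarith) _)
    (pow_le_one₀ (by linarith) (by linarith))

theorem sparseBound_antitone (hp : 1 - p ≤ p) (hp1 : p ≤ 1) (d : ℕ) :
    Antitone (sparseBound p d) := fun _ _ ht =>
  pow_sub_mul_pow_antitone (by linarith) hp (min_le_min_left d (Nat.log_mono_right ht))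
    (min_le_left _ _)

theorem sparseBound_succ_le (hp : 1 - p ≤ p) (hp1 : p ≤ 1) (d t : ℕ) :
    sparseBound p (d + 1) t ≤ p * sparseBound p d t := by
  have h := pow_sub_mul_pow_antitone (by linarith) hp
    (min_le_min_right (Nat.log 2 t) (Nat.le_succ d)) (min_le_left (d + 1) (Nat.log 2 t))
  refine h.trans_eq ?_
  rw [sparseBound, ← mul_assoc, ← pow_succ']
  congr 2
  omega

theorem sparseBound_succ_two_mul (d : ℕ) {t : ℕ} (ht : t ≠ 0) :
    sparseBound p (d + 1) (2 * t) = (1 - p) * sparseBound p d t := by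
  rw [sparseBound, sparseBound, mul_comm 2 t, Nat.log_mul_base one_lt_two ht,
    Nat.add_min_add_right, Nat.add_sub_add_right, pow_succ]
  ring

end SparseBound

theorem sparseBound_le_prodProb_evalGF2 {n d : ℕ} {p : ℝ} (hp : 1 - p ≤ p) (hp1 : p ≤ 1)
    {P : Finset (Finset (Fin n))} (hP : P.Nonempty) (hdeg : ∀ M ∈ P, M.card ≤ d) :
    sparseBound p d P.card ≤ prodProb p (evalGF2 P · = true) := by
  induction hV : (vars P).card using Nat.strong_induction_on generalizing P d with
  | _ V ih =>
  obtain hvars | ⟨i, hi⟩ := (vars P).eq_empty_or_nonempty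
  · rw [eq_singleton_empty_of_vars_eq_empty hP hvars, prodProb_evalGF2_singleton_empty]
    exact sparseBound_le_one hp hp1 _ _
  have ihBelow : ∀ {Q}, MonomialsBelow Q P i → Q.Nonempty → ∀ {d'}, (∀ N ∈ Q, N.card ≤ d') →
      sparseBound p d' Q.card ≤ prodProb p (evalGF2 Q · = true) :=
    fun hQ hne _ hd' => ih _ (hV ▸ hQ.card_vars_lt hi) hne hd' rfl
  have hp0 : 0 ≤ 1 - p := by linarith
  obtain ⟨M, hM, hiM⟩ := mem_biUnion.mp hi
  obtain ⟨d, rfl⟩ := Nat.exists_eq_add_one.mpr ((card_pos.mpr ⟨i, hiM⟩).trans_le (hdeg M hM))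
  have hderiv : ∀ N ∈ pderivGF2 P i, N.card ≤ d :=
    fun N hN => Nat.le_of_succ_le_succ (card_add_one_le_of_mem_pderivGF2 hdeg hN)
  have hcard := card_pderivGF2_add_card_restrictFalse P i
  rw [prodProb_evalGF2_eq_add p P i]
  obtain h0 | h0 := (restrictFalse P i).eq_empty_or_nonempty
  · -- `P = xᵢ · ∂ᵢP`
    rw [h0, card_empty, add_zero] at hcard
    rw [h0, prodProb_evalGF2_empty, restrictTrue, h0, ← bot_eq_empty, symmDiff_bot, mul_zero,
      zero_add, ← hcard]
    exact (sparseBound_succ_le hp hp1 _ _).trans (mul_le_mul_of_nonneg_left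
      (ihBelow (monomialsBelow_pderivGF2 P i) (card_pos.mp (hcard ▸ hP.card_pos)) hderiv)
      (hp0.trans hp))
  obtain h1 | h1 := (restrictTrue P i).eq_empty_or_nonempty
  · -- `P = (1 + xᵢ) · P|_{xᵢ=0}`
    have hderiv_eq : pderivGF2 P i = restrictFalse P i := symmDiff_eq_empty.mp h1
    rw [hderiv_eq, ← two_mul] at hcard
    rw [h1, prodProb_evalGF2_empty, mul_zero, add_zero, ← hcard,
      sparseBound_succ_two_mul _ h0.card_pos.ne']
    exact mul_le_mul_of_nonneg_left
      (ihBelow (monomialsBelow_restrictFalse P i) h0 (hderiv_eq ▸ hderiv)) hp0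
  have hbound : ∀ Q, MonomialsBelow Q P i → Q.Nonempty → Q.card ≤ P.card →
      sparseBound p (d + 1) P.card ≤ prodProb p (evalGF2 Q · = true) := fun Q hQ hne hQP =>
    (sparseBound_antitone hp hp1 _ hQP).trans (ihBelow hQ hne (hQ.card_le hdeg))
  calc sparseBound p (d + 1) P.card
      = (1 - p) * sparseBound p (d + 1) P.card + p * sparseBound p (d + 1) P.card := by ring
    _ ≤ _ := add_le_add
      (mul_le_mul_of_nonneg_left
        (hbound _ (monomialsBelow_restrictFalse P i) h0 (card_filter_le _ _)) hp0)
      (mul_le_mul_of_nonneg_left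
        (hbound _ (monomialsBelow_restrictTrue P i) h1 (card_restrictTrue_le P i)) (hp0.trans hp))

/-- for two distinct `s`-sparse degree-`d` polynomials `f, g`
over GF(2) and `p ≥ 1/2`: if `d ≥ ⌊log₂ s⌋ + 1` then
`Pr_{D_{n,p}}[f ≠ g] ≥ p^{d-⌊log₂ s⌋-1}(1-p)^{⌊log₂ s⌋+1}`,
and if `d < ⌊log₂ s⌋ + 1` then `Pr_{D_{n,p}}[f ≠ g] ≥ (1-p)^d`. -/
theorem stmt5 {n d s : ℕ} (P Q : Finset (Finset (Fin n))) (hPQ : P ≠ Q)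
    (hsP : P.card ≤ s) (hsQ : Q.card ≤ s)
    (hdP : ∀ M ∈ P, M.card ≤ d) (hdQ : ∀ M ∈ Q, M.card ≤ d)
    (p : ℝ) (hp : 1 / 2 ≤ p) (hp1 : p ≤ 1) :
    (Nat.log 2 s + 1 ≤ d →
      prodProb p (fun x => evalGF2 P x ≠ evalGF2 Q x) ≥
        p ^ (d - Nat.log 2 s - 1) * (1 - p) ^ (Nat.log 2 s + 1)) ∧
    (d < Nat.log 2 s + 1 →
      prodProb p (fun x => evalGF2 P x ≠ evalGF2 Q x) ≥ (1 - p) ^ d) := by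
  have hp' : 1 - p ≤ p := by linarith
  have hne : (P ∆ Q).Nonempty := symmDiff_nonempty.mpr hPQ
  have hcard : (P ∆ Q).card ≤ 2 * s :=
    (card_le_card symmDiff_subset_union).trans ((card_union_le P Q).trans (by omega))
  have hdeg : ∀ M ∈ P ∆ Q, M.card ≤ d := fun M hM =>
    (mem_symmDiff.mp hM).elim (fun h => hdP M h.1) (fun h => hdQ M h.1)
  have key : sparseBound p d (2 * s) ≤ prodProb p (fun x => evalGF2 P x ≠ evalGF2 Q x) := by
    refine (sparseBound_antitone hp' hp1 d hcard).trans
      ((sparseBound_le_prodProb_evalGF2 hp' hp1 hne hdeg).trans_eq (prodProb_congr p fun x => ?_))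
    simp [evalGF2_symmDiff]
  have hs : s ≠ 0 := by have := hne.card_pos; omega
  rw [sparseBound, mul_comm 2 s, Nat.log_mul_base one_lt_two hs] at key
  constructor
  · intro hd
    rwa [min_eq_right hd, ← Nat.sub_sub] at key
  · intro hd
    rwa [min_eq_left hd.le, Nat.sub_self, pow_zero, one_mul] at key
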